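/- arXiv:math/0212084 — 5 statements merged into one kernel-verified Lean document; each statement's English description precedes it below -/
import Mathlib

section
/- Let a, b ∈ ℕ^n be distinct exponent vectors with the same total degree. If a · w > b · w for every strictly decreasing positive weight vector w ∈ ℝ^n, then Δ(a)_k ≥ Δ(b)_k for all k (i.e., a >_Borel b). -/
/-- `Delta a k = a₁ + ⋯ + a_{k+1}` (partial sums of the exponent vector). -/
def Delta {n : ℕ} (a : Fin n → ℕ) (k : Fin n) : ℕ := ∑ i ∈ Finset.Iic k, a i

theorem weight_inequalities_imply_borel_dominance (n d : ℕ) (a b : Fin n → ℕ)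
    (hab : a ≠ b) (ha : ∑ i, a i = d) (hb : ∑ i, b i = d)
    (h : ∀ w : Fin n → ℝ, StrictAnti w → (∀ i, 0 < w i) →
      (∑ i, (b i : ℝ) * w i) < (∑ i, (a i : ℝ) * w i)) :
    ∀ k, Delta b k ≤ Delta a k := by
  intro k
  by_contra hk
  push_neg at hk
  set ε : ℝ := 1 / (d * n + 1) with hε
  have hdn : (0:ℝ) ≤ (d:ℝ) * n := by positivity
  have hεpos : 0 < ε := by positivity
  set w : Fin n → ℝ := fun i => (if i ≤ k then (1:ℝ) else 0) + ε * ((n:ℝ) - i) with hw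
  have hipos : ∀ i : Fin n, (0:ℝ) < (n:ℝ) - i := by
    intro i
    have := i.is_lt
    have : (i:ℝ) < n := by exact_mod_cast this
    linarith
  have hanti : StrictAnti w := by
    intro i j hij
    have h1 : (if j ≤ k then (1:ℝ) else 0) ≤ (if i ≤ k then (1:ℝ) else 0) := by
      by_cases hj : j ≤ k
      · have : i ≤ k := le_of_lt (lt_of_lt_of_le hij hj)
        simp [hj, this]
      · simp [hj]; split <;> norm_num
    have h2 : ε * ((n:ℝ) - j) < ε * ((n:ℝ) - i) := by
      have : (i:ℝ) < j := by exact_mod_cast hij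
      have : (n:ℝ) - j < (n:ℝ) - i := by linarith
      exact mul_lt_mul_of_pos_left this hεpos
    simpa [hw] using add_lt_add_of_le_of_lt h1 h2
  have hpos : ∀ i, 0 < w i := by
    intro i
    have := hipos i
    have h2 : 0 < ε * ((n:ℝ) - i) := mul_pos hεpos this
    have h1 : (0:ℝ) ≤ (if i ≤ k then (1:ℝ) else 0) := by split <;> norm_num
    simp only [hw]
    linarith
  -- key sum decomposition
  have key : ∀ c : Fin n → ℕ, ∑ i, (c i : ℝ) * w i
      = (Delta c k : ℝ) + ε * ∑ i, (c i : ℝ) * ((n:ℝ) - i) := by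
    intro c
    have h1 : ∑ i, (c i : ℝ) * w i
        = (∑ i, if i ≤ k then (c i : ℝ) else 0) + ε * ∑ i, (c i : ℝ) * ((n:ℝ) - i) := by
      simp only [hw, mul_add, Finset.sum_add_distrib, Finset.mul_sum]
      congr 1
      · apply Finset.sum_congr rfl
        intro i _
        split <;> simp
      · apply Finset.sum_congr rfl
        intro i _
        ring
    rw [h1]
    congr 1
    rw [Delta]
    push_cast
    rw [← Finset.sum_filter]
    apply Finset.sum_congr
    · ext i; simp
    · intro i _; rfl
  -- bounds for the perturbation sums
  have hbound : ∀ c : Fin n → ℕ, (∑ i, c i = d) →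
      (0:ℝ) ≤ ∑ i, (c i : ℝ) * ((n:ℝ) - i) ∧ ∑ i, (c i : ℝ) * ((n:ℝ) - i) ≤ (d:ℝ) * n := by
    intro c hc
    constructor
    · apply Finset.sum_nonneg
      intro i _
      exact mul_nonneg (by positivity) (le_of_lt (hipos i))
    · calc ∑ i, (c i : ℝ) * ((n:ℝ) - i) ≤ ∑ i, (c i : ℝ) * n := by
            apply Finset.sum_le_sum
            intro i _
            apply mul_le_mul_of_nonneg_left _ (by positivity)
            have : (0:ℝ) ≤ (i:ℝ) := by positivity
            linarith
        _ = (d:ℝ) * n := by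
            rw [← Finset.sum_mul]
            congr 1
            exact_mod_cast hc
  have hεsmall : ε * ((d:ℝ) * n) < 1 := by
    rw [hε]
    rw [div_mul_eq_mul_div, one_mul, div_lt_one (by positivity)]
    linarith
  have hlt := h w hanti hpos
  rw [key a, key b] at hlt
  have hba : (Delta a k : ℝ) + 1 ≤ (Delta b k : ℝ) := by exact_mod_cast hk
  have h1 := hbound a ha
  have h2 := hbound b hb
  have hA : ε * ∑ i, (a i : ℝ) * ((n:ℝ) - i) < 1 :=
    lt_of_le_of_lt (mul_le_mul_of_nonneg_left h1.2 (le_of_lt hεpos)) hεsmall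
  have hB : (0:ℝ) ≤ ε * ∑ i, (b i : ℝ) * ((n:ℝ) - i) :=
    mul_nonneg (le_of_lt hεpos) h2.1
  linarith
end

section
/- Let B be a strongly stable (Borel-fixed) set of monomials of degree d in K[x₁,…,xₙ] and let R₁B denote the set of monomials of degree d+1 of the form xⱼ·u with u ∈ B. Then for every i, the number of monomials v ∈ R₁B with max(v) = i equals the number of monomials u ∈ B with max(u) ≤ i; that is, m_i(R₁B) = m_{≤i}(B). -/
/-- The exponent vector of the monomial `x_j · u / x_i` (exchange move). -/
def exch {n : ℕ} (u : Fin n → ℕ) (i j : Fin n) : Fin n → ℕ :=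
  fun k => if k = i then u i - 1 else if k = j then u j + 1 else u k

/-- `maxIdx u` is the largest (1-based) index of a variable dividing the monomial `u`
(`0` for the constant monomial). -/
def maxIdx {n : ℕ} (u : Fin n → ℕ) : ℕ :=
  (Finset.univ.filter fun i => 0 < u i).sup fun i : Fin n => (i : ℕ) + 1

/-- `R₁B`: the set of degree `d+1` monomials obtained multiplying an element of `B`
by a variable. -/
def R1 {n : ℕ} (B : Finset (Fin n → ℕ)) : Finset (Fin n → ℕ) :=
  B.biUnion fun u => Finset.univ.image fun j : Fin n => u + Pi.single j 1

lemma maxIdx_le_iff {n : ℕ} (u : Fin n → ℕ) (i : ℕ) :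
    maxIdx u ≤ i ↔ ∀ k : Fin n, 0 < u k → (k : ℕ) + 1 ≤ i := by
  simp [maxIdx, Finset.sup_le_iff]

lemma exists_of_maxIdx_eq {n : ℕ} (u : Fin n → ℕ) (i : ℕ) (hi : 1 ≤ i)
    (h : maxIdx u = i) : ∃ k : Fin n, 0 < u k ∧ (k : ℕ) + 1 = i := by
  have hne : ((Finset.univ.filter fun k => 0 < u k)).Nonempty := by
    by_contra hc
    rw [Finset.not_nonempty_iff_eq_empty] at hc
    simp [maxIdx, hc] at h
    omega
  obtain ⟨k, hk, hk2⟩ := Finset.exists_mem_eq_sup _ hne (fun k : Fin n => (k : ℕ) + 1)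
  refine ⟨k, by simpa using hk, ?_⟩
  rw [maxIdx] at h
  omega

/-- Bigatti's Proposition: for a strongly stable set `B` of degree-`d` monomials,
`m_i(R₁B) = m_{≤i}(B)` for every `i = 1, …, n`. -/
theorem mi_R1_eq_mle (n d : ℕ) (hd : 0 < d) (B : Finset (Fin n → ℕ))
    (hdeg : ∀ u ∈ B, ∑ i, u i = d)
    (hss : ∀ u ∈ B, ∀ i j : Fin n, j < i → 0 < u i → exch u i j ∈ B) :
    ∀ i : ℕ, 1 ≤ i → i ≤ n →
      ((R1 B).filter fun v => maxIdx v = i).card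
        = (B.filter fun u => maxIdx u ≤ i).card := by
  intro i hi1 hin
  set i₀ : Fin n := ⟨i - 1, by omega⟩ with hi₀def
  have hi₀v : (i₀ : ℕ) + 1 = i := by simp [hi₀def]; omega
  apply Finset.card_nbij' (fun v => v - Pi.single i₀ 1) (fun u => u + Pi.single i₀ 1)
  · -- forward: v ∈ R1 filter → v - e ∈ B filter
    intro v hv
    rw [Finset.mem_coe, Finset.mem_filter] at hv ⊢
    beta_reduce
    obtain ⟨hvR, hvm⟩ := hv
    rw [R1, Finset.mem_biUnion] at hvR
    obtain ⟨w, hwB, hw⟩ := hvR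
    rw [Finset.mem_image] at hw
    obtain ⟨j, -, hj⟩ := hw
    subst hj
    -- max index facts about v := w + single j 1
    have hle : ∀ k : Fin n, 0 < ((w + Pi.single j 1 : Fin n → ℕ)) k → (k : ℕ) + 1 ≤ i := by
      rw [← maxIdx_le_iff]; omega
    constructor
    · by_cases hji : j = i₀
      · subst hji
        have : (w + Pi.single i₀ 1) - Pi.single i₀ 1 = w := by
          funext k
          by_cases hk : k = i₀ <;> simp [hk, Pi.single_apply]
        rw [this]; exact hwB
      · have hvi₀ : 0 < w i₀ := by
          obtain ⟨k, hk1, hk2⟩ := exists_of_maxIdx_eq _ i hi1 hvm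
          have hk : k = i₀ := by
            apply Fin.ext; simp [hi₀def]; omega
          subst hk
          simpa [Pi.single_apply, hji] using hk1
        have hji2 : j < i₀ := by
          have := hle j (by simp [Pi.single_apply])
          rw [Fin.lt_iff_val_lt_val]
          simp [hi₀def]
          have : (j : ℕ) ≠ (i₀ : ℕ) := fun hc => hji (Fin.ext hc)
          simp [hi₀def] at this ⊢
          omega
        have hmem := hss w hwB i₀ j hji2 hvi₀
        have : (w + Pi.single j 1) - Pi.single i₀ 1 = exch w i₀ j := by
          funext k
          by_cases hk : k = i₀
          · subst hk; simp [exch, Pi.single_apply, Ne.symm hji]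
          · by_cases hk2 : k = j <;> simp [exch, hk, hk2, Pi.single_apply, hji]
        rw [this]; exact hmem
    · rw [maxIdx_le_iff]
      intro k hk
      apply hle k
      have : ((w + Pi.single j 1 : Fin n → ℕ)) k ≥ ((w + Pi.single j 1 - Pi.single i₀ 1 : Fin n → ℕ)) k := by
        simp [Pi.sub_apply]
      omega
  · -- backward: u ∈ B filter → u + e ∈ R1 filter
    intro u hu
    rw [Finset.mem_coe, Finset.mem_filter] at hu ⊢
    obtain ⟨huB, hum⟩ := hu
    constructor
    · rw [R1, Finset.mem_biUnion]
      exact ⟨u, huB, Finset.mem_image.2 ⟨i₀, Finset.mem_univ _, rfl⟩⟩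
    · apply le_antisymm
      · rw [maxIdx_le_iff]
        intro k hk
        by_cases hki : k = i₀
        · subst hki; omega
        · rw [maxIdx_le_iff] at hum
          apply hum k
          simpa [Pi.single_apply, hki] using hk
      · calc i = (i₀ : ℕ) + 1 := hi₀v.symm
          _ ≤ maxIdx (u + Pi.single i₀ 1) := by
            rw [maxIdx]
            exact Finset.le_sup (f := fun k : Fin n => (k : ℕ) + 1) (by simp [Pi.single_apply])
  · -- left inverse
    intro v hv
    rw [Finset.mem_coe, Finset.mem_filter] at hv
    obtain ⟨k, hk1, hk2⟩ := exists_of_maxIdx_eq _ i hi1 hv.2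
    have hk : k = i₀ := by apply Fin.ext; simp [hi₀def]; omega
    subst hk
    funext m
    by_cases hm : m = i₀ <;> simp [hm, Pi.single_apply] <;> omega
  · -- right inverse
    intro u hu
    funext m
    by_cases hm : m = i₀ <;> simp [hm, Pi.single_apply]
end

section
/- Let B be a strongly stable set of monomials of degree d in n variables, and let R₁B be the set of monomials of degree d+1 in the ideal generated by B. For v ∈ R₁B let j(v) be the largest index j such that xⱼ divides v and v/xⱼ ∈ B. Then j(v) = max(v) for every v ∈ R₁B, where max(v) is the largest index of a variable dividing v; i.e., for every v ∈ R₁B, v/x_{max(v)} ∈ B. -/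
/-- For a strongly stable set `B` of degree-`d` monomials, every `v ∈ R₁B` satisfies
`v / x_{max(v)} ∈ B`. -/
theorem div_max_mem_of_mem_R1 (n d : ℕ) (hd : 0 < d) (B : Finset (Fin n → ℕ))
    (hdeg : ∀ u ∈ B, ∑ i, u i = d)
    (hss : ∀ u ∈ B, ∀ i j : Fin n, j < i → 0 < u i → exch u i j ∈ B) :
    ∀ v ∈ R1 B, ∃ i : Fin n, (i : ℕ) + 1 = maxIdx v ∧ 0 < v i ∧
      (fun k => if k = i then v i - 1 else v k) ∈ B := by
  intro v hv
  simp only [R1, Finset.mem_biUnion, Finset.mem_image, Finset.mem_univ, true_and] at hv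
  obtain ⟨u, hu, j, rfl⟩ := hv
  set v : Fin n → ℕ := u + Pi.single j 1 with hvdef
  have hvj : 0 < v j := by
    simp [hvdef, Pi.single_eq_same]
  have hne : (Finset.univ.filter fun i => 0 < v i).Nonempty :=
    ⟨j, by simp [hvj]⟩
  obtain ⟨i, hi, hsup⟩ := Finset.exists_mem_eq_sup _ hne (fun i : Fin n => (i : ℕ) + 1)
  simp only [Finset.mem_filter, Finset.mem_univ, true_and] at hi
  have hji : (j : ℕ) + 1 ≤ (i : ℕ) + 1 := by
    rw [← hsup]
    exact Finset.le_sup (f := fun i : Fin n => (i : ℕ) + 1) (by simp [hvj])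
  have hji' : j ≤ i := by omega
  refine ⟨i, hsup.symm, hi, ?_⟩
  rcases eq_or_lt_of_le hji' with heq | hlt
  · subst heq
    have : (fun k => if k = j then v j - 1 else v k) = u := by
      funext k
      by_cases hk : k = j
      · subst hk; simp [hvdef, Pi.single_eq_same]
      · simp [hk, hvdef, Pi.single_eq_of_ne hk]
    rwa [this]
  · have hij : i ≠ j := (Fin.lt_iff_val_lt_val.mp hlt).ne' ∘ congrArg Fin.val
    have hui : 0 < u i := by
      have : v i = u i := by simp [hvdef, Pi.single_eq_of_ne hij]
      omega
    have hmem := hss u hu i j hlt hui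
    have : (fun k => if k = i then v i - 1 else v k) = exch u i j := by
      funext k
      by_cases hk : k = i
      · subst hk; simp [exch, hvdef, Pi.single_eq_of_ne hij]
      · by_cases hkj : k = j
        · subst hkj; simp [exch, hk, hvdef, Pi.single_eq_same]
        · simp [exch, hk, hkj, hvdef, Pi.single_eq_of_ne hkj]
    rwa [this]
end

section
/- Let I and J be strongly stable monomial ideals in K[x₁,…,xₙ] with the same Hilbert function (|I_j| = |J_j| for all j), both generated in degrees ≤ k. If m_{≤i}(J_j) ≤ m_{≤i}(I_j) for all i and j, then m_i(G(I)) ≤ m_i(G(J)) for all i, where G denotes the set of minimal monomial generators. -/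
namespace SSAux

open Finset
open scoped Classical

variable {n : ℕ}

lemma le_maxIdx {u : Fin n → ℕ} {i : Fin n} (h : 0 < u i) : (i : ℕ) + 1 ≤ maxIdx u :=
  Finset.le_sup (f := fun i : Fin n => (i : ℕ) + 1) (by simp [h])

lemma maxIdx_le (u : Fin n → ℕ) : maxIdx u ≤ n :=
  Finset.sup_le fun i _ => i.isLt

lemma eq_zero_of_maxIdx_eq_zero {u : Fin n → ℕ} (h : maxIdx u = 0) : u = 0 := by
  funext i
  by_contra hi
  have h1 : 0 < u i := Nat.pos_of_ne_zero (by simpa using hi)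
  have := le_maxIdx h1
  omega

lemma exists_maxvar {u : Fin n → ℕ} {c : ℕ} (h : maxIdx u = c + 1) :
    ∃ iv : Fin n, (iv : ℕ) = c ∧ 0 < u iv := by
  have hne : (Finset.univ.filter fun i => 0 < u i).Nonempty := by
    by_contra hne
    rw [Finset.not_nonempty_iff_eq_empty] at hne
    simp [maxIdx, hne] at h
  obtain ⟨b, hb, hsup⟩ := Finset.exists_mem_eq_sup _ hne (fun i : Fin n => (i : ℕ) + 1)
  have hb' : 0 < u b := (Finset.mem_filter.mp hb).2
  have : maxIdx u = (b : ℕ) + 1 := hsup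
  exact ⟨b, by omega, hb'⟩

lemma maxIdx_add_single {v : Fin n → ℕ} {iv : Fin n} (h : maxIdx v ≤ (iv : ℕ) + 1) :
    maxIdx (v + (Pi.single iv 1 : Fin n → ℕ)) = (iv : ℕ) + 1 := by
  apply le_antisymm
  · apply Finset.sup_le
    intro j hj
    have hj' : 0 < v j + (Pi.single iv 1 : Fin n → ℕ) j := by
      simpa using (Finset.mem_filter.mp hj).2
    by_cases hji : j = iv
    · subst hji; exact le_refl _
    · rw [Pi.single_eq_of_ne hji] at hj'
      simp only [add_zero] at hj'
      exact le_trans (le_maxIdx hj') h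
  · exact le_maxIdx (by simp [Pi.single_eq_same])

lemma sum_add_single (v : Fin n → ℕ) (j : Fin n) :
    ∑ i, (v + (Pi.single j 1 : Fin n → ℕ)) i = (∑ i, v i) + 1 := by
  simp [Finset.sum_add_distrib]

section

variable {k : ℕ} {S : Set (Fin n → ℕ)} {Ideg : ℕ → Finset (Fin n → ℕ)}
variable {GI : Finset (Fin n → ℕ)}

lemma memI (hIdeg : ∀ j : ℕ, (↑(Ideg j) : Set (Fin n → ℕ)) = {a ∈ S | ∑ i, a i = j})
    (m : ℕ) (u : Fin n → ℕ) : u ∈ Ideg m ↔ u ∈ S ∧ ∑ i, u i = m := by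
  have := Set.ext_iff.mp (hIdeg m) u
  simpa using this

lemma memG (hGI : (↑GI : Set (Fin n → ℕ)) =
      {a ∈ S | ¬∃ b ∈ S, ∃ j : Fin n, a = b + Pi.single j 1})
    (u : Fin n → ℕ) :
    u ∈ GI ↔ u ∈ S ∧ ¬∃ b ∈ S, ∃ j : Fin n, u = b + Pi.single j 1 := by
  have := Set.ext_iff.mp hGI u
  simpa using this

lemma nongen_iff (hSss : ∀ a ∈ S, ∀ i j : Fin n, j < i → 0 < a i → exch a i j ∈ S)
    {u : Fin n → ℕ} {iv : Fin n} (hmax : maxIdx u = (iv : ℕ) + 1) :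
    (∃ b ∈ S, ∃ j : Fin n, u = b + Pi.single j 1) ↔
    ∃ v ∈ S, u = v + Pi.single iv 1 := by
  constructor
  · rintro ⟨b, hb, j, rfl⟩
    by_cases hj : j = iv
    · subst hj; exact ⟨b, hb, rfl⟩
    · have huj : 0 < (b + (Pi.single j 1 : Fin n → ℕ)) j := by
        simp [Pi.single_eq_same]
      have hj1 : (j : ℕ) + 1 ≤ (iv : ℕ) + 1 := hmax ▸ le_maxIdx huj
      have hjne : (j : ℕ) ≠ (iv : ℕ) := fun h => hj (Fin.ext h)
      have hjlt : j < iv := by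
        rw [Fin.lt_def]; omega
      obtain ⟨iv', hiv', hpos⟩ := exists_maxvar hmax
      have hiv'eq : iv' = iv := Fin.ext hiv'
      rw [hiv'eq] at hpos
      have hbiv : 0 < b iv := by
        have : (b + (Pi.single j 1 : Fin n → ℕ)) iv = b iv := by
          simp [Pi.single_eq_of_ne (Ne.symm hj)]
        rwa [this] at hpos
      refine ⟨exch b iv j, hSss b hb iv j hjlt hbiv, ?_⟩
      funext t
      simp only [exch, Pi.add_apply]
      by_cases ht : t = iv
      · subst ht
        rw [if_pos rfl, Pi.single_eq_same, Pi.single_eq_of_ne (Ne.symm hj)]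
        omega
      · rw [if_neg ht, Pi.single_eq_of_ne ht]
        by_cases htj : t = j
        · subst htj
          rw [if_pos rfl, Pi.single_eq_same]; omega
        · rw [if_neg htj, Pi.single_eq_of_ne htj]
  · rintro ⟨v, hv, rfl⟩
    exact ⟨v, hv, iv, rfl⟩

lemma nongen_card
    (hSideal : ∀ a ∈ S, ∀ b : Fin n → ℕ, a + b ∈ S)
    (hSss : ∀ a ∈ S, ∀ i j : Fin n, j < i → 0 < a i → exch a i j ∈ S)
    (hIdeg : ∀ j : ℕ, (↑(Ideg j) : Set (Fin n → ℕ)) = {a ∈ S | ∑ i, a i = j})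
    (iv : Fin n) (j : ℕ) :
    ((Ideg j).filter fun u => maxIdx u ≤ (iv : ℕ) + 1).card =
    ((Ideg (j + 1)).filter fun u =>
      maxIdx u = (iv : ℕ) + 1 ∧ ∃ b ∈ S, ∃ t : Fin n, u = b + Pi.single t 1).card := by
  apply Finset.card_bij (fun v _ => v + Pi.single iv 1)
  · intro v hv
    rw [Finset.mem_filter] at hv
    obtain ⟨hvS, hvd⟩ := (memI hIdeg j v).mp hv.1
    rw [Finset.mem_filter]
    refine ⟨(memI hIdeg (j+1) _).mpr ⟨hSideal v hvS _, by rw [sum_add_single, hvd]⟩, ?_, ?_⟩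
    · exact maxIdx_add_single hv.2
    · exact ⟨v, hvS, iv, rfl⟩
  · intro v1 h1 v2 h2 he
    exact add_left_injective _ he
  · intro u hu
    rw [Finset.mem_filter] at hu
    obtain ⟨huI, hmax, hdec⟩ := hu
    obtain ⟨huS, hud⟩ := (memI hIdeg (j+1) u).mp huI
    obtain ⟨v, hvS, rfl⟩ := (nongen_iff hSss hmax).mp hdec
    have hvd : ∑ i, v i = j := by
      have := sum_add_single v iv
      omega
    have hvmax : maxIdx v ≤ (iv : ℕ) + 1 := by
      apply Finset.sup_le
      intro t ht
      have ht' : 0 < v t := by simpa using (Finset.mem_filter.mp ht).2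
      have : 0 < (v + (Pi.single iv 1 : Fin n → ℕ)) t := by
        simp only [Pi.add_apply]; omega
      have := le_maxIdx this
      omega
    refine ⟨v, ?_, rfl⟩
    rw [Finset.mem_filter]
    exact ⟨(memI hIdeg j v).mpr ⟨hvS, hvd⟩, hvmax⟩


lemma Ideg_zero (hSproper : (0 : Fin n → ℕ) ∉ S)
    (hIdeg : ∀ j : ℕ, (↑(Ideg j) : Set (Fin n → ℕ)) = {a ∈ S | ∑ i, a i = j}) :
    Ideg 0 = ∅ := by
  ext u
  simp only [Finset.notMem_empty, iff_false]
  intro hu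
  obtain ⟨huS, hud⟩ := (memI hIdeg 0 u).mp hu
  have hz : u = 0 := by
    funext i
    simpa using Finset.sum_eq_zero_iff.mp hud i (Finset.mem_univ i)
  exact hSproper (hz ▸ huS)

lemma step
    (hSideal : ∀ a ∈ S, ∀ b : Fin n → ℕ, a + b ∈ S)
    (hSss : ∀ a ∈ S, ∀ i j : Fin n, j < i → 0 < a i → exch a i j ∈ S)
    (hIdeg : ∀ j : ℕ, (↑(Ideg j) : Set (Fin n → ℕ)) = {a ∈ S | ∑ i, a i = j})
    (iv : Fin n) (j : ℕ) :
    ((Ideg (j + 1)).filter fun u => maxIdx u = (iv : ℕ) + 1 ∧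
        ¬∃ b ∈ S, ∃ t : Fin n, u = b + Pi.single t 1).card
      + ((Ideg (j + 1)).filter fun u => maxIdx u ≤ (iv : ℕ)).card
      + ((Ideg j).filter fun u => maxIdx u ≤ (iv : ℕ) + 1).card
    = ((Ideg (j + 1)).filter fun u => maxIdx u ≤ (iv : ℕ) + 1).card := by
  rw [nongen_card hSideal hSss hIdeg iv j]
  have h1 : ((Ideg (j + 1)).filter fun u => maxIdx u ≤ (iv : ℕ) + 1)
      = ((Ideg (j + 1)).filter fun u => maxIdx u ≤ (iv : ℕ))
        ∪ ((Ideg (j + 1)).filter fun u => maxIdx u = (iv : ℕ) + 1) := by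
    ext u
    simp only [Finset.mem_filter, Finset.mem_union]
    constructor
    · rintro ⟨h, hm⟩
      rcases Nat.lt_or_ge (maxIdx u) ((iv : ℕ) + 1) with hl | hl
      · exact Or.inl ⟨h, by omega⟩
      · exact Or.inr ⟨h, by omega⟩
    · rintro (⟨h, hm⟩ | ⟨h, hm⟩) <;> exact ⟨h, by omega⟩
  have hd1 : Disjoint ((Ideg (j + 1)).filter fun u => maxIdx u ≤ (iv : ℕ))
      ((Ideg (j + 1)).filter fun u => maxIdx u = (iv : ℕ) + 1) := by
    rw [Finset.disjoint_left]
    intro u h1 h2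
    rw [Finset.mem_filter] at h1 h2
    omega
  have h2 : ((Ideg (j + 1)).filter fun u => maxIdx u = (iv : ℕ) + 1)
      = ((Ideg (j + 1)).filter fun u => maxIdx u = (iv : ℕ) + 1 ∧
          ¬∃ b ∈ S, ∃ t : Fin n, u = b + Pi.single t 1)
        ∪ ((Ideg (j + 1)).filter fun u => maxIdx u = (iv : ℕ) + 1 ∧
          ∃ b ∈ S, ∃ t : Fin n, u = b + Pi.single t 1) := by
    ext u
    simp only [Finset.mem_filter, Finset.mem_union]
    tauto
  have hd2 : Disjoint ((Ideg (j + 1)).filter fun u => maxIdx u = (iv : ℕ) + 1 ∧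
          ¬∃ b ∈ S, ∃ t : Fin n, u = b + Pi.single t 1)
      ((Ideg (j + 1)).filter fun u => maxIdx u = (iv : ℕ) + 1 ∧
          ∃ b ∈ S, ∃ t : Fin n, u = b + Pi.single t 1) := by
    rw [Finset.disjoint_left]
    intro u h1 h2
    rw [Finset.mem_filter] at h1 h2
    exact h1.2.2 h2.2.2
  rw [h1, Finset.card_union_of_disjoint hd1, h2, Finset.card_union_of_disjoint hd2]
  omega

lemma telescope (hSproper : (0 : Fin n → ℕ) ∉ S)
    (hSideal : ∀ a ∈ S, ∀ b : Fin n → ℕ, a + b ∈ S)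
    (hSss : ∀ a ∈ S, ∀ i j : Fin n, j < i → 0 < a i → exch a i j ∈ S)
    (hIdeg : ∀ j : ℕ, (↑(Ideg j) : Set (Fin n → ℕ)) = {a ∈ S | ∑ i, a i = j})
    (iv : Fin n) : ∀ K : ℕ,
    (∑ j ∈ Finset.range K,
      (((Ideg (j + 1)).filter fun u => maxIdx u = (iv : ℕ) + 1 ∧
          ¬∃ b ∈ S, ∃ t : Fin n, u = b + Pi.single t 1).card
        + ((Ideg (j + 1)).filter fun u => maxIdx u ≤ (iv : ℕ)).card))
    = ((Ideg K).filter fun u => maxIdx u ≤ (iv : ℕ) + 1).card := by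
  intro K
  induction K with
  | zero => simp [Ideg_zero hSproper hIdeg]
  | succ K ih =>
    rw [Finset.sum_range_succ, ih]
    have := step hSideal hSss hIdeg iv K
    omega

lemma gen_card {k : ℕ}
    (hSproper : (0 : Fin n → ℕ) ∉ S)
    (hSgen : ∀ a ∈ S, k < ∑ i, a i → ∃ b ∈ S, ∃ j : Fin n, a = b + Pi.single j 1)
    (hIdeg : ∀ j : ℕ, (↑(Ideg j) : Set (Fin n → ℕ)) = {a ∈ S | ∑ i, a i = j})
    (hGI : (↑GI : Set (Fin n → ℕ)) =
      {a ∈ S | ¬∃ b ∈ S, ∃ j : Fin n, a = b + Pi.single j 1})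
    (iv : Fin n) :
    (GI.filter fun u => maxIdx u = (iv : ℕ) + 1).card
    = ∑ j ∈ Finset.range k,
        ((Ideg (j + 1)).filter fun u => maxIdx u = (iv : ℕ) + 1 ∧
          ¬∃ b ∈ S, ∃ t : Fin n, u = b + Pi.single t 1).card := by
  have hmap : ∀ u ∈ GI.filter fun u => maxIdx u = (iv : ℕ) + 1,
      (∑ i, u i) ∈ Finset.range (k + 1) := by
    intro u hu
    rw [Finset.mem_filter] at hu
    obtain ⟨huS, hgen⟩ := (memG hGI u).mp hu.1
    rw [Finset.mem_range]
    by_contra h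
    exact hgen (hSgen u huS (by omega))
  rw [Finset.card_eq_sum_card_fiberwise hmap, Finset.sum_range_succ']
  have h0 : ((GI.filter fun u => maxIdx u = (iv : ℕ) + 1).filter
      fun u => (∑ i, u i) = 0).card = 0 := by
    rw [Finset.card_eq_zero, Finset.filter_eq_empty_iff]
    intro u hu hd
    rw [Finset.mem_filter] at hu
    obtain ⟨huS, _⟩ := (memG hGI u).mp hu.1
    have hz : u = 0 := by
      funext i
      simpa using Finset.sum_eq_zero_iff.mp hd i (Finset.mem_univ i)
    exact hSproper (hz ▸ huS)
  rw [h0, add_zero]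
  apply Finset.sum_congr rfl
  intro j _
  congr 1
  ext u
  simp only [Finset.mem_filter]
  constructor
  · rintro ⟨⟨hG, hm⟩, hd⟩
    obtain ⟨huS, hgen⟩ := (memG hGI u).mp hG
    exact ⟨(memI hIdeg (j + 1) u).mpr ⟨huS, hd⟩, hm, hgen⟩
  · rintro ⟨hI, hm, hgen⟩
    obtain ⟨huS, hd⟩ := (memI hIdeg (j + 1) u).mp hI
    exact ⟨⟨(memG hGI u).mpr ⟨huS, hgen⟩, hm⟩, hd⟩

lemma master {k : ℕ}
    (hSproper : (0 : Fin n → ℕ) ∉ S)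
    (hSideal : ∀ a ∈ S, ∀ b : Fin n → ℕ, a + b ∈ S)
    (hSss : ∀ a ∈ S, ∀ i j : Fin n, j < i → 0 < a i → exch a i j ∈ S)
    (hSgen : ∀ a ∈ S, k < ∑ i, a i → ∃ b ∈ S, ∃ j : Fin n, a = b + Pi.single j 1)
    (hIdeg : ∀ j : ℕ, (↑(Ideg j) : Set (Fin n → ℕ)) = {a ∈ S | ∑ i, a i = j})
    (hGI : (↑GI : Set (Fin n → ℕ)) =
      {a ∈ S | ¬∃ b ∈ S, ∃ j : Fin n, a = b + Pi.single j 1})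
    (iv : Fin n) :
    (GI.filter fun u => maxIdx u = (iv : ℕ) + 1).card
      + ∑ j ∈ Finset.range k, ((Ideg (j + 1)).filter fun u => maxIdx u ≤ (iv : ℕ)).card
    = ((Ideg k).filter fun u => maxIdx u ≤ (iv : ℕ) + 1).card := by
  rw [gen_card hSproper hSgen hIdeg hGI iv, ← Finset.sum_add_distrib]
  exact telescope hSproper hSideal hSss hIdeg iv k

lemma shadow_card {k : ℕ}
    (hSproper : (0 : Fin n → ℕ) ∉ S)
    (hSideal : ∀ a ∈ S, ∀ b : Fin n → ℕ, a + b ∈ S)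
    (hSss : ∀ a ∈ S, ∀ i j : Fin n, j < i → 0 < a i → exch a i j ∈ S)
    (hSgen : ∀ a ∈ S, k < ∑ i, a i → ∃ b ∈ S, ∃ j : Fin n, a = b + Pi.single j 1)
    (hIdeg : ∀ j : ℕ, (↑(Ideg j) : Set (Fin n → ℕ)) = {a ∈ S | ∑ i, a i = j}) :
    (Ideg (k + 1)).card
    = ∑ j ∈ Finset.range n, ((Ideg k).filter fun u => maxIdx u ≤ j + 1).card := by
  have hmap : ∀ u ∈ Ideg (k + 1), maxIdx u ∈ Finset.range (n + 1) := by
    intro u _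
    rw [Finset.mem_range]
    have := maxIdx_le u
    omega
  rw [Finset.card_eq_sum_card_fiberwise hmap, Finset.sum_range_succ']
  have h0 : ((Ideg (k + 1)).filter fun u => maxIdx u = 0).card = 0 := by
    rw [Finset.card_eq_zero, Finset.filter_eq_empty_iff]
    intro u hu h
    obtain ⟨huS, _⟩ := (memI hIdeg (k + 1) u).mp hu
    exact hSproper ((eq_zero_of_maxIdx_eq_zero h) ▸ huS)
  rw [h0, add_zero]
  apply Finset.sum_congr rfl
  intro j hj
  rw [Finset.mem_range] at hj
  have key := nongen_card hSideal hSss hIdeg (⟨j, hj⟩ : Fin n) k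
  simp only [Fin.val_mk] at key
  rw [key]
  congr 1
  ext u
  simp only [Finset.mem_filter]
  constructor
  · rintro ⟨hI, hm⟩
    refine ⟨hI, hm, ?_⟩
    obtain ⟨huS, hd⟩ := (memI hIdeg (k + 1) u).mp hI
    exact hSgen u huS (by omega)
  · rintro ⟨hI, hm, _⟩
    exact ⟨hI, hm⟩

end
end SSAux

/-- If `I`, `J` are (proper) strongly stable monomial ideals with the same Hilbert
function, generated in degrees `≤ k`, and `m_{≤i}(J_j) ≤ m_{≤i}(I_j)` for all `i, j`,
then `m_i(G(I)) ≤ m_i(G(J))` for all `i`. -/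
theorem mi_generators_le (n k : ℕ) (S T : Set (Fin n → ℕ))
    (hSproper : (0 : Fin n → ℕ) ∉ S) (hTproper : (0 : Fin n → ℕ) ∉ T)
    (hSideal : ∀ a ∈ S, ∀ b : Fin n → ℕ, a + b ∈ S)
    (hTideal : ∀ a ∈ T, ∀ b : Fin n → ℕ, a + b ∈ T)
    (hSss : ∀ a ∈ S, ∀ i j : Fin n, j < i → 0 < a i → exch a i j ∈ S)
    (hTss : ∀ a ∈ T, ∀ i j : Fin n, j < i → 0 < a i → exch a i j ∈ T)
    (hSgen : ∀ a ∈ S, k < ∑ i, a i → ∃ b ∈ S, ∃ j : Fin n, a = b + Pi.single j 1)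
    (hTgen : ∀ a ∈ T, k < ∑ i, a i → ∃ b ∈ T, ∃ j : Fin n, a = b + Pi.single j 1)
    (Ideg Jdeg : ℕ → Finset (Fin n → ℕ))
    (hIdeg : ∀ j : ℕ, (↑(Ideg j) : Set (Fin n → ℕ)) = {a ∈ S | ∑ i, a i = j})
    (hJdeg : ∀ j : ℕ, (↑(Jdeg j) : Set (Fin n → ℕ)) = {a ∈ T | ∑ i, a i = j})
    (hHilb : ∀ j : ℕ, (Ideg j).card = (Jdeg j).card)
    (hmle : ∀ i j : ℕ, ((Jdeg j).filter fun u => maxIdx u ≤ i).card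
      ≤ ((Ideg j).filter fun u => maxIdx u ≤ i).card)
    (GI GJ : Finset (Fin n → ℕ))
    (hGI : (↑GI : Set (Fin n → ℕ)) =
      {a ∈ S | ¬∃ b ∈ S, ∃ j : Fin n, a = b + Pi.single j 1})
    (hGJ : (↑GJ : Set (Fin n → ℕ)) =
      {a ∈ T | ¬∃ b ∈ T, ∃ j : Fin n, a = b + Pi.single j 1}) :
    ∀ i : ℕ, (GI.filter fun u => maxIdx u = i).card
      ≤ (GJ.filter fun u => maxIdx u = i).card := by
  intro i
  match i with
  | 0 =>
    have h0 : GI.filter (fun u => maxIdx u = 0) = ∅ := by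
      rw [Finset.filter_eq_empty_iff]
      intro u hu hm
      obtain ⟨huS, _⟩ := (SSAux.memG hGI u).mp hu
      exact hSproper ((SSAux.eq_zero_of_maxIdx_eq_zero hm) ▸ huS)
    simp [h0]
  | (c + 1) =>
    by_cases hc : c < n
    · have hI := SSAux.master hSproper hSideal hSss hSgen hIdeg hGI (⟨c, hc⟩ : Fin n)
      have hJ := SSAux.master hTproper hTideal hTss hTgen hJdeg hGJ (⟨c, hc⟩ : Fin n)
      simp only [Fin.val_mk] at hI hJ
      -- sums of the lower-max counts
      have hP : ∑ j ∈ Finset.range k, ((Jdeg (j + 1)).filter fun u => maxIdx u ≤ c).card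
          ≤ ∑ j ∈ Finset.range k, ((Ideg (j + 1)).filter fun u => maxIdx u ≤ c).card :=
        Finset.sum_le_sum fun j _ => hmle c (j + 1)
      -- equality of m_{≤ c+1} at degree k
      have hshI := SSAux.shadow_card hSproper hSideal hSss hSgen hIdeg
      have hshJ := SSAux.shadow_card hTproper hTideal hTss hTgen hJdeg
      have hsum : ∑ j ∈ Finset.range n, ((Jdeg k).filter fun u => maxIdx u ≤ j + 1).card
          = ∑ j ∈ Finset.range n, ((Ideg k).filter fun u => maxIdx u ≤ j + 1).card := by
        rw [← hshI, ← hshJ, hHilb (k + 1)]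
      have heq := (Finset.sum_eq_sum_iff_of_le
        (fun j _ => hmle (j + 1) k)).mp hsum c (Finset.mem_range.mpr hc)
      omega
    · have h0 : GI.filter (fun u => maxIdx u = c + 1) = ∅ := by
        rw [Finset.filter_eq_empty_iff]
        intro u _ hm
        have := SSAux.maxIdx_le u
        omega
      simp [h0]
end

section
/- Let a be a lower triangular invertible n×n matrix over a field K acting on R = K[x₁,…,xₙ] by a(xᵢ) = Σⱼ a_{ji}xⱼ. Then for every monomial m of degree d, a(m) = λ·m + (a K-linear combination of monomials of degree d that are strictly smaller than m in the Borel order), where λ = Π a_{ii}^{(exponent of xᵢ in m)} ≠ 0. -/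
open MvPolynomial

/-- The Borel order: `x^a ≥_B x^b` iff `Δ(a) ≥ Δ(b)` componentwise. -/
def BorelLE {n : ℕ} (b a : Fin n → ℕ) : Prop := ∀ k, Delta b k ≤ Delta a k

section Aux

variable {n : ℕ} {K : Type*} [CommRing K]

lemma Delta_coe_add (v w : Fin n →₀ ℕ) (k : Fin n) :
    Delta ⇑(v + w) k = Delta ⇑v k + Delta ⇑w k := by
  simp [Delta, Finset.sum_add_distrib]

lemma delta_eq_iff {v w : Fin n →₀ ℕ} (h : ∀ k, Delta ⇑v k = Delta ⇑w k) : v = w := by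
  ext i
  have key : ∀ m : ℕ, ∀ i : Fin n, i.val = m → v i = w i := by
    intro m
    induction m using Nat.strong_induction_on with
    | _ m ih =>
      intro i hi
      have h1 := h i
      simp only [Delta] at h1
      have hIic : Finset.Iic i = insert i (Finset.Iio i) := by
        ext j; simp [Finset.mem_Iic, Finset.mem_Iio, le_iff_lt_or_eq, or_comm]
      rw [hIic] at h1
      rw [Finset.sum_insert (by simp), Finset.sum_insert (by simp)] at h1
      have h2 : ∑ j ∈ Finset.Iio i, v j = ∑ j ∈ Finset.Iio i, w j := by
        apply Finset.sum_congr rfl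
        intro j hj
        have hj2 : j < i := Finset.mem_Iio.mp hj
        exact ih j.val (hi ▸ Fin.lt_iff_val_lt_val.mp hj2) j rfl
      omega
  exact key i.val i rfl

lemma borel_strict {v w : Fin n →₀ ℕ} (hle : BorelLE ⇑v ⇑w) (hne : v ≠ w) :
    ∃ k, Delta ⇑v k < Delta ⇑w k := by
  by_contra hc
  push_neg at hc
  exact hne (delta_eq_iff fun k => le_antisymm (hle k) (hc k))

/-- `Good w c p` : `p = c·x^w + (lower order terms)`. -/
def Good (w : Fin n →₀ ℕ) (c : K) (p : MvPolynomial (Fin n) K) : Prop :=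
  ∃ h : MvPolynomial (Fin n) K,
    p = C c * monomial w 1 + h ∧
    ∀ v ∈ h.support, (∑ i, v i = ∑ i, w i) ∧ BorelLE ⇑v ⇑w ∧ v ≠ w

lemma good_one : Good (0 : Fin n →₀ ℕ) (1 : K) 1 :=
  ⟨0, by simp, by simp⟩

/-- weak domination -/
def WLE (v w : Fin n →₀ ℕ) : Prop := (∑ i, v i = ∑ i, w i) ∧ BorelLE ⇑v ⇑w

lemma wle_refl (w : Fin n →₀ ℕ) : WLE w w := ⟨rfl, fun _ => le_rfl⟩

lemma wle_add {b c w w' : Fin n →₀ ℕ} (hb : WLE b w) (hc : WLE c w') :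
    WLE (b + c) (w + w') := by
  constructor
  · have : ∀ x : Fin n →₀ ℕ, ∀ y : Fin n →₀ ℕ, ∑ i, (x + y) i = ∑ i, x i + ∑ i, y i := by
      intro x y; simp [Finset.sum_add_distrib]
    rw [this, this, hb.1, hc.1]
  · intro k
    rw [Delta_coe_add, Delta_coe_add]
    exact Nat.add_le_add (hb.2 k) (hc.2 k)

lemma wle_add_ne {b c w w' : Fin n →₀ ℕ} (hb : WLE b w) (hc : WLE c w')
    (hne : b ≠ w ∨ c ≠ w') : b + c ≠ w + w' := by
  intro heq
  have hk : ∃ k, Delta ⇑(b + c) k < Delta ⇑(w + w') k := by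
    rcases hne with h | h
    · obtain ⟨k, hk⟩ := borel_strict hb.2 h
      exact ⟨k, by rw [Delta_coe_add, Delta_coe_add]; exact Nat.add_lt_add_of_lt_of_le hk (hc.2 k)⟩
    · obtain ⟨k, hk⟩ := borel_strict hc.2 h
      exact ⟨k, by rw [Delta_coe_add, Delta_coe_add]; exact Nat.add_lt_add_of_le_of_lt (hb.2 k) hk⟩
  obtain ⟨k, hk⟩ := hk
  rw [heq] at hk
  exact lt_irrefl _ hk

lemma good_mul {w w' : Fin n →₀ ℕ} {c c' : K} {p p' : MvPolynomial (Fin n) K}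
    (hp : Good w c p) (hp' : Good w' c' p') : Good (w + w') (c * c') (p * p') := by
  classical
  obtain ⟨h, hpe, hs⟩ := hp
  obtain ⟨h', hpe', hs'⟩ := hp'
  refine ⟨C c * monomial w 1 * h' + h * (C c' * monomial w' 1) + h * h', ?_, ?_⟩
  · have hmm : C c * monomial w 1 * (C c' * monomial w' (1:K))
        = C (c * c') * monomial (w + w') 1 := by
      rw [C_mul_monomial, C_mul_monomial, C_mul_monomial, monomial_mul]
      congr 1
      ring
    rw [hpe, hpe', add_mul, mul_add, mul_add, hmm]
    ring
  · intro v hv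
    -- v is in the support of a sum of three products
    have hsup : v ∈ (C c * monomial w 1 * h').support ∪
        ((h * (C c' * monomial w' 1)).support ∪ (h * h').support) := by
      have := MvPolynomial.support_add (p := C c * monomial w 1 * h')
        (q := h * (C c' * monomial w' 1) + h * h')
      have h2 := MvPolynomial.support_add (p := h * (C c' * monomial w' 1)) (q := h * h')
      rw [add_assoc] at hv
      have := this hv
      rcases Finset.mem_union.mp this with h3 | h3
      · exact Finset.mem_union.mpr (Or.inl h3)
      · exact Finset.mem_union.mpr (Or.inr (h2 h3))
    have hmono : ∀ e : Fin n →₀ ℕ, ∀ r : K, (C r * monomial e (1:K)).support ⊆ {e} := by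
      intro e r
      rw [MvPolynomial.C_mul_monomial, mul_one]
      exact MvPolynomial.support_monomial_subset
    have key : ∃ b c : Fin n →₀ ℕ, v = b + c ∧ WLE b w ∧ WLE c w' ∧ (b ≠ w ∨ c ≠ w') := by
      rcases Finset.mem_union.mp hsup with h3 | h3
      · have := MvPolynomial.support_mul _ _ h3
        obtain ⟨b, hb, cc, hcc, hbc⟩ := Finset.mem_add.mp this
        have hbw : b = w := Finset.mem_singleton.mp (hmono w c hb)
        obtain ⟨hd, hle, hne⟩ := hs' cc hcc
        exact ⟨b, cc, hbc.symm, hbw ▸ wle_refl w, ⟨hd, hle⟩, Or.inr hne⟩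
      rcases Finset.mem_union.mp h3 with h4 | h4
      · have := MvPolynomial.support_mul _ _ h4
        obtain ⟨b, hb, cc, hcc, hbc⟩ := Finset.mem_add.mp this
        have hcw : cc = w' := Finset.mem_singleton.mp (hmono w' c' hcc)
        obtain ⟨hd, hle, hne⟩ := hs b hb
        exact ⟨b, cc, hbc.symm, ⟨hd, hle⟩, hcw ▸ wle_refl w', Or.inl hne⟩
      · have := MvPolynomial.support_mul _ _ h4
        obtain ⟨b, hb, cc, hcc, hbc⟩ := Finset.mem_add.mp this
        obtain ⟨hd, hle, hne⟩ := hs b hb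
        obtain ⟨hd', hle', hne'⟩ := hs' cc hcc
        exact ⟨b, cc, hbc.symm, ⟨hd, hle⟩, ⟨hd', hle'⟩, Or.inl hne⟩
    obtain ⟨b, cc, hv2, hbw, hcw, hne⟩ := key
    subst hv2
    have h5 := wle_add hbw hcw
    exact ⟨h5.1, h5.2, wle_add_ne hbw hcw hne⟩

lemma good_pow {w : Fin n →₀ ℕ} {c : K} {p : MvPolynomial (Fin n) K}
    (hp : Good w c p) (m : ℕ) : Good (m • w) (c ^ m) (p ^ m) := by
  induction m with
  | zero => simpa using good_one
  | succ m ih =>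
    have := good_mul ih hp
    rw [succ_nsmul, pow_succ, pow_succ]
    exact this

lemma good_prod {ι : Type*} [DecidableEq ι] (s : Finset ι) (w : ι → Fin n →₀ ℕ)
    (c : ι → K) (p : ι → MvPolynomial (Fin n) K) (hg : ∀ i ∈ s, Good (w i) (c i) (p i)) :
    Good (∑ i ∈ s, w i) (∏ i ∈ s, c i) (∏ i ∈ s, p i) := by
  induction s using Finset.induction_on with
  | empty => simpa using good_one
  | @insert i s' hni ih =>
    rw [Finset.sum_insert hni, Finset.prod_insert hni, Finset.prod_insert hni]
    exact good_mul (hg i (Finset.mem_insert_self i s'))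
      (ih fun j hj => hg j (Finset.mem_insert_of_mem hj))

lemma good_linear (a : Matrix (Fin n) (Fin n) K)
    (hlow : ∀ i j : Fin n, j < i → a j i = 0) (i : Fin n) :
    Good (Finsupp.single i 1) (a i i) (∑ j, C (a j i) * X j) := by
  classical
  refine ⟨∑ j ∈ Finset.univ.erase i, C (a j i) * X j, ?_, ?_⟩
  · have hxi : C (a i i) * monomial (Finsupp.single i 1) (1:K) = C (a i i) * X i := by
      rw [C_mul_X_eq_monomial, C_mul_monomial, mul_one]
    rw [hxi, ← Finset.add_sum_erase Finset.univ (fun j => C (a j i) * X j)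
      (Finset.mem_univ i)]
  · intro v hv
    have hcoeff : coeff v (∑ j ∈ Finset.univ.erase i, C (a j i) * X j) ≠ 0 :=
      MvPolynomial.mem_support_iff.mp hv
    rw [MvPolynomial.coeff_sum] at hcoeff
    obtain ⟨j, hj, hcj⟩ := Finset.exists_ne_zero_of_sum_ne_zero hcoeff
    rw [C_mul_X_eq_monomial, coeff_monomial] at hcj
    have hji : j ≠ i := Finset.ne_of_mem_erase hj
    by_cases hv2 : Finsupp.single j 1 = v
    · subst hv2
      have hij : i < j := by
        rcases lt_or_gt_of_ne hji with h | h
        · exact absurd (hlow i j h) (by simpa using hcj)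
        · exact h
      refine ⟨?_, ?_, ?_⟩
      · simp [Finsupp.single_apply]
      · intro k
        simp only [Delta, Finsupp.single_apply]
        rw [Finset.sum_ite_eq, Finset.sum_ite_eq]
        simp only [Finset.mem_Iic]
        split_ifs with h1 h2 h2
        · exact le_refl 1
        · exact absurd (le_trans (le_of_lt hij) h1) h2
        · exact Nat.zero_le 1
        · exact le_refl 0
      · intro heq
        have := Finsupp.single_left_injective (by norm_num : (1:ℕ) ≠ 0) heq
        exact hji this
    · simp [hv2] at hcj

end Aux

/-- A lower triangular invertible matrix `a` acting by `a(xᵢ) = Σⱼ a_{ji} xⱼ` sends a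
monomial `m = x^u` of degree `d` to `λ·m` plus a combination of degree-`d` monomials
strictly smaller than `m` in the Borel order, where `λ = Π aᵢᵢ^{uᵢ} ≠ 0`. -/
theorem lower_triangular_action_on_monomial (n : ℕ) (K : Type*) [Field K]
    (a : Matrix (Fin n) (Fin n) K)
    (hlow : ∀ i j : Fin n, j < i → a j i = 0)
    (hunit : IsUnit a.det)
    (u : Fin n →₀ ℕ) (d : ℕ) (hu : ∑ i, u i = d) :
    (∏ i, a i i ^ u i) ≠ 0 ∧
    ∃ h : MvPolynomial (Fin n) K,
      (aeval fun i : Fin n => ∑ j, C (a j i) * X j) (monomial u (1 : K))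
        = C (∏ i, a i i ^ u i) * monomial u (1 : K) + h ∧
      ∀ v ∈ h.support, ∑ i, v i = d ∧ BorelLE ⇑v ⇑u ∧ v ≠ u := by
  classical
  have hdiag : ∀ i, a i i ≠ 0 := by
    have htri : a.BlockTriangular OrderDual.toDual := by
      intro i j hij
      exact hlow j i hij
    have hdet : a.det = ∏ i, a i i := Matrix.det_of_lowerTriangular a htri
    intro i hi
    rw [hdet] at hunit
    have := hunit.ne_zero
    exact this (Finset.prod_eq_zero (Finset.mem_univ i) hi)
  constructor
  · exact Finset.prod_ne_zero_iff.mpr fun i _ => pow_ne_zero _ (hdiag i)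
  · -- rewrite the aeval as a product
    have haev : (aeval fun i : Fin n => ∑ j, C (a j i) * X j) (monomial u (1 : K))
        = ∏ i, (∑ j, C (a j i) * X j) ^ u i := by
      rw [aeval_monomial, map_one, one_mul]
      exact Finsupp.prod_fintype _ _ fun i => pow_zero _
    have hgood : Good u (∏ i, a i i ^ u i) (∏ i, (∑ j, C (a j i) * X j) ^ u i) := by
      have h1 : ∀ i : Fin n, Good (Finsupp.single i (u i)) (a i i ^ u i)
          ((∑ j, C (a j i) * X j) ^ u i) := by
        intro i
        have := good_pow (good_linear a hlow i) (u i)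
        rwa [Finsupp.smul_single, smul_eq_mul, mul_one] at this
      have := good_prod Finset.univ (fun i => Finsupp.single i (u i))
        (fun i => a i i ^ u i) (fun i => (∑ j, C (a j i) * X j) ^ u i)
        (fun i _ => h1 i)
      rwa [Finsupp.univ_sum_single u] at this
    obtain ⟨h, he, hs⟩ := hgood
    refine ⟨h, by rw [haev, he], fun v hv => ?_⟩
    obtain ⟨hd, hle, hne⟩ := hs v hv
    exact ⟨hu ▸ hd, hle, hne⟩
end
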